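/- arXiv:1402.0183 — 3 statements merged into one kernel-verified Lean document; each statement's English description precedes it below -/
import Mathlib

section
/- Let C0 ≥ 1, h ≥ 0, t ∈ ℝ, u = it + h, and let s ≥ 1 be an integer. Let X be a random variable taking values in the nonnegative integers with X ≤ C0 almost surely, and let ν_m = E[X(X−1)⋯(X−m+1)] denote its m-th factorial moment. Then |E[e^{uX}] − 1 − Σ_{m=1}^s (ν_m/m!)(e^u − 1)^m| ≤ e^{hC0}(e^h + 1)^{s+1} ν_{s+1}/(s+1)!. -/
open MeasureTheory Finset
open scoped BigOperators

/-!
Put `z = e^u - 1`, so that `e^{un} = (1 + z)^n` and `∑_{m ≤ s} C(n, m) z^m` is the binomial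
expansion of `(1 + z)^n` truncated at order `s`. Because `‖1 + z‖ = e^h ≥ 1`, Pascal's rule and
induction on `n` bound the truncation error by `C(n, s+1) ‖z‖^{s+1} ‖1 + z‖^n`. Taking
expectations, `E[C(X, m)] = ν_m / m!`, while `‖z‖ ≤ e^h + 1` and `‖1 + z‖^X ≤ e^{h C0}`.
-/

/-- `m`-th factorial moment `ν_m = E[X(X-1)⋯(X-m+1)]` of a ℕ-valued random variable. -/
noncomputable def facMoment {Ω : Type*} [MeasurableSpace Ω] (μ : Measure Ω)
    (X : Ω → ℕ) (m : ℕ) : ℝ :=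
  ∫ ω, (Nat.descFactorial (X ω) m : ℝ) ∂μ

lemma sum_range_choose_succ_mul_pow {R : Type*} [CommRing R] (z : R) (n s : ℕ) :
    ∑ m ∈ range (s + 1), ((n + 1).choose m : R) * z ^ m
      = (z + 1) * ∑ m ∈ range (s + 1), (n.choose m : R) * z ^ m - n.choose s * z ^ (s + 1) := by
  induction s with
  | zero => simp
  | succ s ih =>
    rw [sum_range_succ, ih, sum_range_succ (fun m => (n.choose m : R) * z ^ m) (s + 1),
      Nat.choose_succ_succ]
    push_cast
    ring

lemma norm_add_one_pow_sub_sum_choose_mul_pow_le {R : Type*} [NormedCommRing R] {z : R}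
    (hz : 1 ≤ ‖z + 1‖) (s n : ℕ) :
    ‖(z + 1) ^ n - ∑ m ∈ range (s + 1), (n.choose m : R) * z ^ m‖
      ≤ n.choose (s + 1) * ‖z‖ ^ (s + 1) * ‖z + 1‖ ^ n := by
  induction n with
  | zero => simp [sum_range_succ']
  | succ n ih =>
    set E := (z + 1) ^ n - ∑ m ∈ range (s + 1), (n.choose m : R) * z ^ m
    have hrec : (z + 1) ^ (n + 1) - ∑ m ∈ range (s + 1), ((n + 1).choose m : R) * z ^ m
        = (z + 1) * E + n.choose s • z ^ (s + 1) := by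
      rw [sum_range_choose_succ_mul_pow, nsmul_eq_mul]; ring
    calc _ = ‖(z + 1) * E + n.choose s • z ^ (s + 1)‖ := by rw [hrec]
      _ ≤ ‖z + 1‖ * ‖E‖ + n.choose s * ‖z‖ ^ (s + 1) :=
        (norm_add_le _ _).trans (add_le_add (norm_mul_le _ _)
          (norm_nsmul_le.trans (by gcongr; exact norm_pow_le' z s.succ_pos)))
      _ ≤ ‖z + 1‖ * (n.choose (s + 1) * ‖z‖ ^ (s + 1) * ‖z + 1‖ ^ n)
          + n.choose s * ‖z‖ ^ (s + 1) * ‖z + 1‖ ^ (n + 1) :=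
        add_le_add (mul_le_mul_of_nonneg_left ih (norm_nonneg _))
          (le_mul_of_one_le_right (by positivity) (one_le_pow₀ hz))
      _ = (n + 1).choose (s + 1) * ‖z‖ ^ (s + 1) * ‖z + 1‖ ^ (n + 1) := by
        rw [Nat.choose_succ_succ]; push_cast; ring

lemma norm_cexp_mul_sub_sum_choose_le {u : ℂ} (hu : 0 ≤ u.re) {C : ℝ} {n : ℕ} (hn : (n : ℝ) ≤ C)
    (s : ℕ) :
    ‖Complex.exp (u * n) - ∑ m ∈ range (s + 1), (n.choose m : ℂ) * (Complex.exp u - 1) ^ m‖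
      ≤ Real.exp (u.re * C) * (Real.exp u.re + 1) ^ (s + 1) * n.choose (s + 1) := by
  set z := Complex.exp u - 1
  have hw : Complex.exp u = z + 1 := (sub_add_cancel _ _).symm
  have hnorm : ‖z + 1‖ = Real.exp u.re := by rw [← hw, Complex.norm_exp]
  rw [mul_comm, Complex.exp_nat_mul, hw]
  calc _ ≤ n.choose (s + 1) * ‖z‖ ^ (s + 1) * ‖z + 1‖ ^ n :=
        norm_add_one_pow_sub_sum_choose_mul_pow_le (hnorm ▸ Real.one_le_exp hu) s n
    _ ≤ n.choose (s + 1) * (Real.exp u.re + 1) ^ (s + 1) * Real.exp (u.re * C) := by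
      gcongr
      · simpa [hnorm] using norm_sub_le (z + 1) 1
      · rw [hnorm, ← Real.exp_nat_mul]
        exact Real.exp_le_exp.2 (by nlinarith)
    _ = _ := by ring

section BoundedNatValued

variable {Ω : Type*} [MeasurableSpace Ω] {μ : Measure Ω} {X : Ω → ℕ}

lemma integrable_comp_of_ae_le [IsFiniteMeasure μ] {E : Type*} [NormedAddCommGroup E]
    (hX : Measurable X) {N : ℕ} (hXN : ∀ᵐ ω ∂μ, X ω ≤ N) (f : ℕ → E) :
    Integrable (fun ω => f (X ω)) μ := by
  refine Integrable.mono' (integrable_const (∑ k ∈ range (N + 1), ‖f k‖))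
    (StronglyMeasurable.of_discrete.comp_measurable hX).aestronglyMeasurable ?_
  filter_upwards [hXN] with ω hω
  exact single_le_sum (f := fun k => ‖f k‖) (fun _ _ => norm_nonneg _)
    (mem_range.2 (Nat.lt_succ_of_le hω))

lemma facMoment_div_factorial (μ : Measure Ω) (X : Ω → ℕ) (m : ℕ) :
    facMoment μ X m / m.factorial = ∫ ω, ((X ω).choose m : ℝ) ∂μ := by
  simp only [facMoment, Nat.descFactorial_eq_factorial_mul_choose, Nat.cast_mul, integral_const_mul]
  field_simp

lemma facMoment_zero [IsProbabilityMeasure μ] (X : Ω → ℕ) : facMoment μ X 0 = 1 := by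
  simp [facMoment]

lemma integral_sum_choose_mul_pow [IsFiniteMeasure μ] (hX : Measurable X) {N : ℕ}
    (hXN : ∀ᵐ ω ∂μ, X ω ≤ N) (z : ℂ) (s : ℕ) :
    ∫ ω, ∑ m ∈ range (s + 1), ((X ω).choose m : ℂ) * z ^ m ∂μ
      = ∑ m ∈ range (s + 1), ((facMoment μ X m / m.factorial : ℝ) : ℂ) * z ^ m := by
  rw [integral_finsetSum _ fun m _ =>
    integrable_comp_of_ae_le hX hXN fun n => (n.choose m : ℂ) * z ^ m]
  refine sum_congr rfl fun m _ => ?_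
  rw [facMoment_div_factorial, ← integral_complex_ofReal, ← integral_mul_const]
  simp

end BoundedNatValued

theorem exp_moment_expansion_general (C0 h t : ℝ) (hh : 0 ≤ h)
    (u : ℂ) (hu : u = t * Complex.I + h) (s : ℕ)
    (Ω : Type*) [MeasurableSpace Ω] (μ : Measure Ω) [IsProbabilityMeasure μ]
    (X : Ω → ℕ) (hX : Measurable X) (hbd : ∀ᵐ ω ∂μ, ((X ω : ℝ)) ≤ C0) :
    ‖((∫ ω, Complex.exp (u * X ω) ∂μ) - 1 -
        ∑ m ∈ Finset.Icc 1 s,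
          ((facMoment μ X m / (Nat.factorial m) : ℝ) : ℂ) * (Complex.exp u - 1) ^ m)‖ ≤
      Real.exp (h * C0) * (Real.exp h + 1) ^ (s + 1)
        * facMoment μ X (s + 1) / (Nat.factorial (s + 1)) := by
  have hre : u.re = h := by simp [hu]
  have hXN : ∀ᵐ ω ∂μ, X ω ≤ ⌊C0⌋₊ := hbd.mono fun ω hω => Nat.le_floor hω
  set P : ℕ → ℂ := fun n => ∑ m ∈ range (s + 1), (n.choose m : ℂ) * (Complex.exp u - 1) ^ m
  have hmean : ∫ ω, Complex.exp (u * X ω) ∂μ - 1 - ∑ m ∈ Icc 1 s,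
        ((facMoment μ X m / m.factorial : ℝ) : ℂ) * (Complex.exp u - 1) ^ m
      = ∫ ω, (Complex.exp (u * X ω) - P (X ω)) ∂μ := by
    rw [integral_sub (integrable_comp_of_ae_le hX hXN fun n => Complex.exp (u * n))
      (integrable_comp_of_ae_le hX hXN P), integral_sum_choose_mul_pow hX hXN,
      range_eq_Ico, sum_eq_sum_Ico_succ_bot s.succ_pos, facMoment_zero, sub_sub,
      ← Ico_add_one_right_eq_Icc]
    simp
  calc _ = ‖∫ ω, (Complex.exp (u * X ω) - P (X ω)) ∂μ‖ := by rw [hmean]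
    _ ≤ ∫ ω, Real.exp (h * C0) * (Real.exp h + 1) ^ (s + 1) * ((X ω).choose (s + 1) : ℝ) ∂μ := by
      refine norm_integral_le_of_norm_le
        ((integrable_comp_of_ae_le hX hXN fun n => (n.choose (s + 1) : ℝ)).const_mul _) ?_
      filter_upwards [hbd] with ω hω
      rw [← hre]
      exact norm_cexp_mul_sub_sum_choose_le (hre ▸ hh) hω s
    _ = _ := by rw [integral_const_mul, ← facMoment_div_factorial]; ring

/-- Relation (21): expansion of `E[e^{uX}]` in factorial moments, `u = it + h`. -/
theorem exp_moment_expansion (C0 h t : ℝ) (hC0 : 1 ≤ C0) (hh : 0 ≤ h)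
    (u : ℂ) (hu : u = t * Complex.I + h) (s : ℕ) (hs : 1 ≤ s)
    (Ω : Type*) [MeasurableSpace Ω] (μ : Measure Ω) [IsProbabilityMeasure μ]
    (X : Ω → ℕ) (hX : Measurable X) (hbd : ∀ᵐ ω ∂μ, ((X ω : ℝ)) ≤ C0) :
    ‖((∫ ω, Complex.exp (u * X ω) ∂μ) - 1 -
        ∑ m ∈ Finset.Icc 1 s,
          ((facMoment μ X m / (Nat.factorial m) : ℝ) : ℂ) * (Complex.exp u - 1) ^ m)‖ ≤
      Real.exp (h * C0) * (Real.exp h + 1) ^ (s + 1)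
        * facMoment μ X (s + 1) / (Nat.factorial (s + 1)) :=
  exp_moment_expansion_general C0 h t hh u hu s Ω μ X hX hbd
end

section
/- Let C0 ≥ 1, h ≥ 0, t ∈ ℝ, u = it + h, and let X_1,…,X_n be 1-dependent random variables taking values in the nonnegative integers with X_i ≤ C0 almost surely. Set a = e^{hC0}(2+h)√C0, Y_j = e^{uX_j} − 1 and Ψ_{jk} = Ê(Y_j, Y_{j+1}, …, Y_k). Assume a²·max_{1≤j≤n} ν_1(j) ≤ 1/100. Then for every k with 4 ≤ k ≤ n and every j with 1 ≤ j ≤ k−3: |Ψ_{jk}| ≤ 250 a⁴ (1/5)^{k−j} Σ_{l=0}^{3} ν_1(k−l)², where ν_1(k) = E[X_k]. -/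
open MeasureTheory ProbabilityTheory Filter Finset
open scoped BigOperators

/-- `X 1, …, X n` is a 1-dependent sequence: for `1 ≤ r ≤ n - 2` the σ-algebra
generated by `X 1, …, X r` is independent of the one generated by `X (r+2), …, X n`. -/
def OneDependent {Ω : Type*} [MeasurableSpace Ω] (μ : Measure Ω) (n : ℕ)
    (X : ℕ → Ω → ℕ) : Prop :=
  ∀ r : ℕ, 1 ≤ r → r + 2 ≤ n →
    Indep (⨆ i ∈ Finset.Icc 1 r, MeasurableSpace.comap (X i) ⊤)
          (⨆ i ∈ Finset.Icc (r + 2) n, MeasurableSpace.comap (X i) ⊤) μ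

/-- Heinrich's cumulant functional `Ê(U_j, …, U_k)`, defined recursively by
`Ê(U_j) = E U_j` and
`Ê(U_j,…,U_k) = E[U_j⋯U_k] - Σ_{l=j}^{k-1} Ê(U_j,…,U_l)·E[U_{l+1}⋯U_k]`. -/
noncomputable def heinrichE {Ω : Type*} [MeasurableSpace Ω] (μ : Measure Ω)
    (U : ℕ → Ω → ℂ) (j : ℕ) (k : ℕ) : ℂ :=
  (∫ ω, ∏ i ∈ Finset.Icc j k, U i ω ∂μ)
    - ∑ l ∈ (Finset.Ico j k).attach,
        heinrichE μ U j l.1 * ∫ ω, ∏ i ∈ Finset.Icc (l.1 + 1) k, U i ω ∂μ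
termination_by k
decreasing_by exact (Finset.mem_Ico.mp l.2).2

/-- Heinrich's functions `φ_k(u)`: `φ_1(u) = E e^{uX_1}` and, for `k ≥ 2`,
`φ_k(u) = 1 + E Y_k + Σ_{j=1}^{k-1} Ψ_{jk} / (φ_j(u)⋯φ_{k-1}(u))`, where
`Y_j = e^{uX_j} - 1` and `Ψ_{jk} = Ê(Y_j,…,Y_k)`. -/
noncomputable def heinrichPhi {Ω : Type*} [MeasurableSpace Ω] (μ : Measure Ω)
    (X : ℕ → Ω → ℕ) (u : ℂ) : ℕ → ℂ
  | 0 => 1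
  | 1 => ∫ ω, Complex.exp (u * (X 1 ω : ℂ)) ∂μ
  | k + 2 =>
      1 + (∫ ω, (Complex.exp (u * (X (k + 2) ω : ℂ)) - 1) ∂μ)
        + ∑ j ∈ (Finset.Icc 1 (k + 1)).attach,
            heinrichE μ (fun i ω => Complex.exp (u * (X i ω : ℂ)) - 1) j.1 (k + 2) /
              ∏ i ∈ (Finset.Icc j.1 (k + 1)).attach, heinrichPhi μ X u i.1
termination_by k => k
decreasing_by
  exact lt_of_le_of_lt (Finset.mem_Icc.mp i.2).2 (Nat.lt_succ_self _)

/-!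
Write `b i = a √(E X_i)`. Pointwise `|e^{u X_i} - 1| ≤ a √X_i`; splitting a block of indices into
its even and odd members, each half is independent by 1-dependence, so Cauchy–Schwarz gives
`|E ∏_{i=l}^m Y_i| ≤ ∏_{i=l}^m b i`. Feeding this into the recursion defining `Ê` yields
`|Ψ_{jk}| ≤ 2^{k-j} ∏_{i=j}^k b i`. The smallness assumption makes every factor `b i ≤ 1/10`,
which is used for all but the last four factors; AM-GM bounds those by `a⁴ Σ_l ν_1(k-l)² / 4`.
-/

namespace Finset

lemma prod_Icc_mul_prod_Icc_add_one {M : Type*} [CommMonoid M] (f : ℕ → M) {j l k : ℕ}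
    (hjl : j ≤ l + 1) (hlk : l ≤ k) :
    (∏ i ∈ Icc j l, f i) * ∏ i ∈ Icc (l + 1) k, f i = ∏ i ∈ Icc j k, f i := by
  simp only [← Ico_add_one_right_eq_Icc]
  exact prod_Ico_consecutive f hjl (by omega)

lemma prod_Icc_eq_prod_Ico_mul_prod_range {M : Type*} [CommMonoid M] (f : ℕ → M) {j k r : ℕ}
    (hr : j + r ≤ k + 1) :
    ∏ i ∈ Icc j k, f i = (∏ i ∈ Ico j (k + 1 - r), f i) * ∏ l ∈ range r, f (k - l) := by
  rw [← Ico_add_one_right_eq_Icc, ← prod_Ico_consecutive f (by omega : j ≤ k + 1 - r)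
    (by omega : k + 1 - r ≤ k + 1)]
  congr 1
  rw [prod_Ico_eq_prod_range, ← prod_range_reflect]
  refine prod_congr (by congr 1; omega) fun l hl => congr_arg f ?_
  have := mem_range.mp hl
  omega

lemma sum_Ico_two_pow_sub_eq (j k : ℕ) :
    ∑ l ∈ Ico j k, (2 : ℝ) ^ (l - j) = 2 ^ (k - j) - 1 := by
  rw [sum_Ico_eq_sum_range]
  simp only [Nat.add_sub_cancel_left]
  rw [geom_sum_eq (by norm_num)]
  norm_num

end Finset

lemma prod_range_sqrt_le_sum_sq_div_four {x : ℕ → ℝ} (hx : ∀ l, 0 ≤ x l) :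
    ∏ l ∈ range 4, √(x l) ≤ (∑ l ∈ range 4, x l ^ 2) / 4 := by
  have hamgm := Real.geom_mean_le_arith_mean_weighted (range 4) (fun _ => 1 / 4)
    (fun l => x l ^ 2) (fun _ _ => by norm_num) (by norm_num) fun l _ => sq_nonneg (x l)
  have hroot : ∀ l, (x l ^ 2) ^ (1 / 4 : ℝ) = √(x l) := fun l => by
    rw [Real.sqrt_eq_rpow, ← Real.rpow_natCast, ← Real.rpow_mul (hx l)]; norm_num
  rw [← mul_sum] at hamgm
  simp only [hroot] at hamgm
  linarith

lemma norm_cexp_mul_natCast_sub_one_le {u : ℂ} (hu : 0 ≤ u.re) {C : ℝ} {x : ℕ}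
    (hx : (x : ℝ) ≤ C) :
    ‖Complex.exp (u * x) - 1‖ ≤ Real.exp (u.re * C) * (2 + u.re) * √C * √x := by
  rcases Nat.eq_zero_or_pos x with rfl | hx1
  · simp
  have h1x : (1 : ℝ) ≤ x := by exact_mod_cast hx1
  have h1C : 1 ≤ √C := Real.one_le_sqrt.mpr (h1x.trans hx)
  have h1sx : 1 ≤ √(x : ℝ) := Real.one_le_sqrt.mpr h1x
  have hexp : Real.exp (u.re * x) ≤ Real.exp (u.re * C) :=
    Real.exp_le_exp.mpr (mul_le_mul_of_nonneg_left hx hu)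
  have hE : 1 ≤ Real.exp (u.re * C) := Real.one_le_exp (mul_nonneg hu (by linarith))
  calc ‖Complex.exp (u * x) - 1‖ ≤ Real.exp (u.re * x) + 1 := by
        refine (norm_sub_le _ _).trans (le_of_eq ?_)
        rw [Complex.norm_exp, norm_one]; simp
    _ ≤ Real.exp (u.re * C) * 2 * 1 * 1 := by linarith
    _ ≤ Real.exp (u.re * C) * (2 + u.re) * √C * √x := by gcongr; linarith

lemma integral_mul_le_sqrt_mul_sqrt {Ω : Type*} [MeasurableSpace Ω] {μ : Measure Ω}
    {F G : Ω → ℝ} (hF0 : 0 ≤ F) (hG0 : 0 ≤ G) (hF : MemLp F 2 μ) (hG : MemLp G 2 μ) :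
    ∫ ω, F ω * G ω ∂μ ≤ √(∫ ω, F ω ^ 2 ∂μ) * √(∫ ω, G ω ^ 2 ∂μ) := by
  have h := integral_mul_le_Lp_mul_Lq_of_nonneg Real.HolderConjugate.two_two
    (ae_of_all _ hF0) (ae_of_all _ hG0) (by simpa using hF) (by simpa using hG)
  simpa [Real.sqrt_eq_rpow] using h

section Heinrich

variable {Ω : Type*} [MeasurableSpace Ω] {μ : Measure Ω}

lemma heinrichE_eq (U : ℕ → Ω → ℂ) (j k : ℕ) :
    heinrichE μ U j k = (∫ ω, ∏ i ∈ Icc j k, U i ω ∂μ)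
      - ∑ l ∈ Ico j k, heinrichE μ U j l * ∫ ω, ∏ i ∈ Icc (l + 1) k, U i ω ∂μ := by
  rw [heinrichE, sum_attach (Ico j k)
    (fun l => heinrichE μ U j l * ∫ ω, ∏ i ∈ Icc (l + 1) k, U i ω ∂μ)]

theorem norm_heinrichE_le {U : ℕ → Ω → ℂ} {b : ℕ → ℝ} (hb : ∀ i, 0 ≤ b i) {j k : ℕ}
    (hprod : ∀ l m, j ≤ l → m ≤ k →
      ‖∫ ω, ∏ i ∈ Icc l m, U i ω ∂μ‖ ≤ ∏ i ∈ Icc l m, b i) :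
    ‖heinrichE μ U j k‖ ≤ 2 ^ (k - j) * ∏ i ∈ Icc j k, b i := by
  induction k using Nat.strong_induction_on with
  | _ k ih =>
  have hterm : ∀ l ∈ Ico j k, ‖heinrichE μ U j l * ∫ ω, ∏ i ∈ Icc (l + 1) k, U i ω ∂μ‖
      ≤ 2 ^ (l - j) * ∏ i ∈ Icc j k, b i := by
    intro l hl
    obtain ⟨hjl, hlk⟩ := mem_Ico.mp hl
    rw [norm_mul, ← prod_Icc_mul_prod_Icc_add_one b (by omega) hlk.le, ← mul_assoc]
    exact mul_le_mul (ih l hlk fun l' m hl' hm => hprod l' m hl' (by omega))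
      (hprod _ _ (by omega) le_rfl) (norm_nonneg _)
      (mul_nonneg (by positivity) (prod_nonneg fun i _ => hb i))
  calc ‖heinrichE μ U j k‖
      ≤ ‖∫ ω, ∏ i ∈ Icc j k, U i ω ∂μ‖
        + ∑ l ∈ Ico j k, ‖heinrichE μ U j l * ∫ ω, ∏ i ∈ Icc (l + 1) k, U i ω ∂μ‖ := by
        rw [heinrichE_eq]
        exact (norm_sub_le _ _).trans (add_le_add_right (norm_sum_le _ _) _)
    _ ≤ ∏ i ∈ Icc j k, b i + ∑ l ∈ Ico j k, 2 ^ (l - j) * ∏ i ∈ Icc j k, b i :=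
        add_le_add (hprod j k le_rfl le_rfl) (sum_le_sum hterm)
    _ = 2 ^ (k - j) * ∏ i ∈ Icc j k, b i := by
        rw [← sum_mul, sum_Ico_two_pow_sub_eq]; ring

end Heinrich

lemma measurable_iSup_comap {Ω : Type*} {X : ℕ → Ω → ℕ} {s : Finset ℕ} {i : ℕ} (hi : i ∈ s)
    (g : ℕ → ℝ) : Measurable[⨆ i ∈ s, MeasurableSpace.comap (X i) ⊤] fun ω => g (X i ω) := by
  refine measurable_from_top.comp ?_
  rw [measurable_iff_comap_le]
  exact le_iSup₂ (f := fun i (_ : i ∈ s) => MeasurableSpace.comap (X i) ⊤) i hi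

namespace OneDependent

variable {Ω : Type*} [MeasurableSpace Ω] {μ : Measure Ω} [IsProbabilityMeasure μ] {n : ℕ}
  {X : ℕ → Ω → ℕ}

theorem integral_prod_eq_prod_integral (hdep : OneDependent μ n X) (hX : ∀ i, Measurable (X i))
    (f : ℕ → ℕ → ℝ) {S : Finset ℕ} (hS : S ⊆ Icc 1 n) (hsep : ∀ i ∈ S, i + 1 ∉ S) :
    ∫ ω, ∏ i ∈ S, f i (X i ω) ∂μ = ∏ i ∈ S, ∫ ω, f i (X i ω) ∂μ := by
  induction S using Finset.induction_on_min with
  | empty => simp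
  | insert a s has ih =>
  have ha : a ∈ Icc 1 n := hS (mem_insert_self a s)
  have has' : a ∉ s := fun h => lt_irrefl a (has a h)
  simp only [prod_insert has']
  rw [← ih ((subset_insert a s).trans hS) fun i hi hi1 => hsep i (mem_insert_of_mem hi)
      (mem_insert_of_mem hi1)]
  rcases s.eq_empty_or_nonempty with rfl | ⟨x, hx⟩
  · simp
  have hfar : ∀ i ∈ s, i ∈ Icc (a + 2) n := fun i hi => by
    have hin := mem_Icc.mp (hS (mem_insert_of_mem hi))
    have hne : i ≠ a + 1 := fun h => hsep a (mem_insert_self a s) (h ▸ mem_insert_of_mem hi)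
    have hlt := has i hi
    exact mem_Icc.mpr ⟨by omega, hin.2⟩
  have hind := hdep a (mem_Icc.mp ha).1
    ((mem_Icc.mp (hfar x hx)).1.trans (mem_Icc.mp (hfar x hx)).2)
  have hmeas : ∀ i, Measurable fun ω => f i (X i ω) := fun i => measurable_from_top.comp (hX i)
  refine IndepFun.integral_fun_mul_eq_mul_integral ?_ (hmeas a).aestronglyMeasurable
    (measurable_prod s fun i _ => hmeas i).aestronglyMeasurable
  rw [IndepFun_iff_Indep]
  refine indep_of_indep_of_le_right (indep_of_indep_of_le_left hind ?_) ?_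
  · exact (measurable_iSup_comap (by simp [(mem_Icc.mp ha).1]) _).comap_le
  · exact (measurable_prod s fun i hi => measurable_iSup_comap (hfar i hi) _).comap_le

theorem integral_prod_le_prod_sqrt (hdep : OneDependent μ n X) (hX : ∀ i, Measurable (X i))
    {f : ℕ → ℕ → ℝ} (hf0 : ∀ i m, 0 ≤ f i m) {B : ℝ} {S : Finset ℕ} (hS : S ⊆ Icc 1 n)
    (hfB : ∀ i ∈ S, ∀ᵐ ω ∂μ, f i (X i ω) ≤ B) :
    ∫ ω, ∏ i ∈ S, f i (X i ω) ∂μ ≤ ∏ i ∈ S, √(∫ ω, f i (X i ω) ^ 2 ∂μ) := by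
  have hmemLp : ∀ T ⊆ S, MemLp (fun ω => ∏ i ∈ T, f i (X i ω)) 2 μ := fun T hT => by
    refine MemLp.of_bound (measurable_prod T fun i _ =>
      measurable_from_top.comp (hX i)).aestronglyMeasurable (B ^ T.card) ?_
    filter_upwards [(T.eventually_all).mpr fun i hi => hfB i (hT hi)] with ω hω
    rw [Real.norm_of_nonneg (prod_nonneg fun i _ => hf0 i _), ← prod_const]
    exact prod_le_prod (fun i _ => hf0 i _) hω
  have hhalf : ∀ p : ℕ → Prop, [DecidablePred p] → (∀ i, p i → ¬ p (i + 1)) →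
      √(∫ ω, (∏ i ∈ S with p i, f i (X i ω)) ^ 2 ∂μ)
        = ∏ i ∈ S with p i, √(∫ ω, f i (X i ω) ^ 2 ∂μ) := by
    intro p _ hp
    simp_rw [← prod_pow]
    rw [integral_prod_eq_prod_integral hdep hX (fun i m => f i m ^ 2)
      ((filter_subset _ _).trans hS)
        fun i hi hi1 => hp i (mem_filter.mp hi).2 (mem_filter.mp hi1).2,
      Real.sqrt_prod _ fun i _ => integral_nonneg fun ω => sq_nonneg _]
  calc ∫ ω, ∏ i ∈ S, f i (X i ω) ∂μ
      = ∫ ω, (∏ i ∈ S with Even i, f i (X i ω)) * ∏ i ∈ S with ¬ Even i, f i (X i ω) ∂μ := by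
        simp_rw [prod_filter_mul_prod_filter_not]
    _ ≤ √(∫ ω, (∏ i ∈ S with Even i, f i (X i ω)) ^ 2 ∂μ)
        * √(∫ ω, (∏ i ∈ S with ¬ Even i, f i (X i ω)) ^ 2 ∂μ) :=
        integral_mul_le_sqrt_mul_sqrt (fun ω => prod_nonneg fun i _ => hf0 i _)
          (fun ω => prod_nonneg fun i _ => hf0 i _) (hmemLp _ (filter_subset _ _))
          (hmemLp _ (filter_subset _ _))
    _ = ∏ i ∈ S, √(∫ ω, f i (X i ω) ^ 2 ∂μ) := by
        rw [hhalf Even fun i hi => Nat.not_even_iff_odd.mpr hi.add_one,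
          hhalf (¬ Even ·) fun i hi => not_not.mpr (Nat.not_even_iff_odd.mp hi).add_one,
          prod_filter_mul_prod_filter_not]

theorem norm_integral_prod_le (hdep : OneDependent μ n X) (hX : ∀ i, Measurable (X i))
    {g : ℕ → ℂ} {a C : ℝ} (ha : 0 ≤ a) (hg : ∀ m : ℕ, (m : ℝ) ≤ C → ‖g m‖ ≤ a * √m)
    {S : Finset ℕ} (hS : S ⊆ Icc 1 n) (hbd : ∀ i ∈ S, ∀ᵐ ω ∂μ, (X i ω : ℝ) ≤ C) :
    ‖∫ ω, ∏ i ∈ S, g (X i ω) ∂μ‖ ≤ ∏ i ∈ S, a * √(∫ ω, (X i ω : ℝ) ∂μ) := by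
  have hsq : ∀ i ∈ S, ∫ ω, ‖g (X i ω)‖ ^ 2 ∂μ ≤ ∫ ω, a ^ 2 * (X i ω : ℝ) ∂μ := fun i hi => by
    refine integral_mono_of_nonneg (ae_of_all _ fun ω => sq_nonneg _) ?_ ?_
    · refine Integrable.of_bound (measurable_const.mul
        (measurable_from_top.comp (hX i))).aestronglyMeasurable (a ^ 2 * C) ?_
      filter_upwards [hbd i hi] with ω hω
      rw [Real.norm_of_nonneg (by positivity)]
      exact mul_le_mul_of_nonneg_left hω (sq_nonneg a)
    · filter_upwards [hbd i hi] with ω hω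
      calc ‖g (X i ω)‖ ^ 2 ≤ (a * √(X i ω : ℝ)) ^ 2 := by
            gcongr
            exact hg _ hω
        _ = a ^ 2 * X i ω := by rw [mul_pow, Real.sq_sqrt (Nat.cast_nonneg _)]
  calc ‖∫ ω, ∏ i ∈ S, g (X i ω) ∂μ‖
      ≤ ∫ ω, ∏ i ∈ S, ‖g (X i ω)‖ ∂μ := by
        simpa only [norm_prod] using
          norm_integral_le_integral_norm (μ := μ) fun ω => ∏ i ∈ S, g (X i ω)
    _ ≤ ∏ i ∈ S, √(∫ ω, ‖g (X i ω)‖ ^ 2 ∂μ) :=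
        hdep.integral_prod_le_prod_sqrt hX (f := fun _ m => ‖g m‖) (fun _ _ => norm_nonneg _) hS
          fun i hi => (hbd i hi).mono fun ω hω =>
            (hg _ hω).trans (mul_le_mul_of_nonneg_left (Real.sqrt_le_sqrt hω) ha)
    _ ≤ ∏ i ∈ S, √(∫ ω, a ^ 2 * (X i ω : ℝ) ∂μ) :=
        prod_le_prod (fun _ _ => Real.sqrt_nonneg _) fun i hi => Real.sqrt_le_sqrt (hsq i hi)
    _ = ∏ i ∈ S, a * √(∫ ω, (X i ω : ℝ) ∂μ) := by
        simp_rw [integral_const_mul, Real.sqrt_mul (sq_nonneg a), Real.sqrt_sq ha]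

end OneDependent

lemma facMoment_one {Ω : Type*} [MeasurableSpace Ω] (μ : Measure Ω) (Y : Ω → ℕ) :
    facMoment μ Y 1 = ∫ ω, (Y ω : ℝ) ∂μ := by
  simp [facMoment]

lemma two_pow_mul_prod_Icc_le {a : ℝ} {ν : ℕ → ℝ} (ha : 0 ≤ a) (hν : ∀ i, 0 ≤ ν i) {j k : ℕ}
    (hjk : j + 3 ≤ k) (hsmall : ∀ i ∈ Ico j (k - 3), a ^ 2 * ν i ≤ 1 / 100) :
    2 ^ (k - j) * ∏ i ∈ Icc j k, a * √(ν i)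
      ≤ 250 * a ^ 4 * (1 / 5) ^ (k - j) * ∑ l ∈ range 4, ν (k - l) ^ 2 := by
  have hhead : ∏ i ∈ Ico j (k - 3), a * √(ν i) ≤ (1 / 10) ^ (k - 3 - j) := by
    refine (prod_le_prod (fun i _ => by positivity) fun i hi => ?_).trans_eq
      (by rw [prod_const, Nat.card_Ico] : ∏ _i ∈ Ico j (k - 3), (1 / 10 : ℝ) = _)
    refine (pow_le_pow_iff_left₀ (by positivity) (by norm_num) two_ne_zero).mp ?_
    rw [mul_pow, Real.sq_sqrt (hν i)]
    linarith [hsmall i hi]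
  have htail : ∏ l ∈ range 4, a * √(ν (k - l))
      ≤ a ^ 4 * ((∑ l ∈ range 4, ν (k - l) ^ 2) / 4) := by
    rw [prod_mul_distrib, prod_const, card_range]
    exact mul_le_mul_of_nonneg_left (prod_range_sqrt_le_sum_sq_div_four fun l => hν _)
      (by positivity)
  rw [prod_Icc_eq_prod_Ico_mul_prod_range _ (r := 4) (by omega), show k + 1 - 4 = k - 3 by omega]
  calc _ ≤ 2 ^ (k - j)
        * ((1 / 10) ^ (k - 3 - j) * (a ^ 4 * ((∑ l ∈ range 4, ν (k - l) ^ 2) / 4))) := by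
        gcongr
    _ = _ := by
        rw [show k - j = k - 3 - j + 3 by omega, pow_add, pow_add,
          show (1 / 5 : ℝ) = 2 * (1 / 10) by norm_num, mul_pow]
        ring

theorem heinrichE_bound_far_general (C0 h t : ℝ) (hh : 0 ≤ h)
    (u : ℂ) (hu : u = t * Complex.I + h)
    (Ω : Type*) [MeasurableSpace Ω] (μ : Measure Ω) [IsProbabilityMeasure μ]
    (n : ℕ) (X : ℕ → Ω → ℕ) (hX : ∀ i, Measurable (X i))
    (hbd : ∀ i, 1 ≤ i → i ≤ n → ∀ᵐ ω ∂μ, ((X i ω : ℝ)) ≤ C0)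
    (hdep : OneDependent μ n X)
    (a : ℝ) (ha : a = Real.exp (h * C0) * (2 + h) * Real.sqrt C0)
    (hsmall : ∀ j ∈ Finset.Icc 1 n, a ^ 2 * facMoment μ (X j) 1 ≤ 1 / 100) :
    ∀ k, 4 ≤ k → k ≤ n → ∀ j, 1 ≤ j → j ≤ k - 3 →
      ‖heinrichE μ (fun i ω => Complex.exp (u * (X i ω : ℂ)) - 1) j k‖ ≤
        250 * a ^ 4 * (1 / 5) ^ (k - j) *
          ∑ l ∈ Finset.range 4, (facMoment μ (X (k - l)) 1) ^ 2 := by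
  intro k hk4 hkn j hj1 hjk
  have ha0 : 0 ≤ a := by rw [ha]; positivity
  have hY : ∀ m : ℕ, (m : ℝ) ≤ C0 → ‖Complex.exp (u * m) - 1‖ ≤ a * √m := fun m hm => by
    have hre : u.re = h := by simp [hu]
    have := norm_cexp_mul_natCast_sub_one_le (hre ▸ hh) hm
    rwa [hre, ← ha] at this
  have hΨ := norm_heinrichE_le (μ := μ) (U := fun i ω => Complex.exp (u * (X i ω : ℂ)) - 1)
    (fun i => by positivity) fun l m hl hm =>
      hdep.norm_integral_prod_le hX ha0 hY (Icc_subset_Icc (hj1.trans hl) (hm.trans hkn))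
        fun i hi => hbd i (by grind) (by grind)
  simp only [facMoment_one] at hsmall ⊢
  exact hΨ.trans <| two_pow_mul_prod_Icc_le ha0 (fun i => integral_nonneg fun ω => by positivity)
    (by omega) fun i hi => hsmall i (by grind)

/-- Lemma 3 (first estimate): bound on `|Ψ_{jk}|` for `1 ≤ j ≤ k - 3`. -/
theorem heinrichE_bound_far (C0 h t : ℝ) (hC0 : 1 ≤ C0) (hh : 0 ≤ h)
    (u : ℂ) (hu : u = t * Complex.I + h)
    (Ω : Type*) [MeasurableSpace Ω] (μ : Measure Ω) [IsProbabilityMeasure μ]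
    (n : ℕ) (X : ℕ → Ω → ℕ) (hX : ∀ i, Measurable (X i))
    (hbd : ∀ i, 1 ≤ i → i ≤ n → ∀ᵐ ω ∂μ, ((X i ω : ℝ)) ≤ C0)
    (hdep : OneDependent μ n X)
    (a : ℝ) (ha : a = Real.exp (h * C0) * (2 + h) * Real.sqrt C0)
    (hsmall : ∀ j ∈ Finset.Icc 1 n, a ^ 2 * facMoment μ (X j) 1 ≤ 1 / 100) :
    ∀ k, 4 ≤ k → k ≤ n → ∀ j, 1 ≤ j → j ≤ k - 3 →
      ‖heinrichE μ (fun i ω => Complex.exp (u * (X i ω : ℂ)) - 1) j k‖ ≤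
        250 * a ^ 4 * (1 / 5) ^ (k - j) *
          ∑ l ∈ Finset.range 4, (facMoment μ (X (k - l)) 1) ^ 2 :=
  heinrichE_bound_far_general C0 h t hh u hu Ω μ n X hX hbd hdep a ha hsmall
end

section
/- Let M : ℤ → ℝ satisfy Σ_{k∈ℤ} |M(k)| < ∞ and Σ_{k∈ℤ} |k|·|M(k)| < ∞, and set M̂(t) = Σ_{k∈ℤ} M(k) e^{itk} and M̂′(t) = Σ_{k∈ℤ} i k M(k) e^{itk} for t ∈ ℝ. Then Σ_{k∈ℤ} |M(k)| ≤ (1/2 + 1/(2π))^{1/2} · ( ∫_{−π}^{π} ( |M̂(t)|² + |M̂′(t)|² ) dt )^{1/2}. -/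
/-! Write `|M k| = √((1 + k²)⁻¹) · √((1 + k²) M(k)²)` and apply Cauchy–Schwarz. Parseval's identity
for absolutely summable Fourier series gives `∫_{-π}^{π} |M̂|² + |M̂′|² = 2π ∑ₖ (1 + k²) M(k)²`, and
the integral test gives `∑ₖ (1 + k²)⁻¹ ≤ 1 + 2 ∫_0^∞ (1 + x²)⁻¹ dx = 1 + π`. The claim follows
since `(1 + π) / (2π) = 1/2 + 1/(2π)`. -/

open MeasureTheory intervalIntegral Real Complex

namespace AddCircle

variable {T : ℝ}

noncomputable def fourierSeries (c : ℤ → ℂ) (x : AddCircle T) : ℂ :=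
  ∑' k, c k * fourier k x

variable {c : ℤ → ℂ}

theorem continuous_fourierSeries (hc : Summable fun k => ‖c k‖) :
    Continuous (fourierSeries (T := T) c) :=
  continuous_tsum (fun k => continuous_const.mul (fourier k).continuous) hc
    fun k x => by simp [Circle.norm_coe]

variable [Fact (0 < T)]

theorem fourierCoeff_fourierSeries (hc : Summable fun k => ‖c k‖) (n : ℤ) :
    fourierCoeff (fourierSeries (T := T) c) n = c n := by
  have hint (k : ℤ) : Integrable (fun x : AddCircle T => fourier (-n) x • (c k * fourier k x))
      haarAddCircle :=
    ((fourier (-n)).continuous.smul (continuous_const.mul (fourier k).continuous))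
      |>.integrable_of_hasCompactSupport (.of_compactSpace _)
  have hnorm (k : ℤ) : ∫ x : AddCircle T, ‖fourier (-n) x • (c k * fourier k x)‖ ∂haarAddCircle
      = ‖c k‖ := by
    simp [Circle.norm_coe]
  calc fourierCoeff (fourierSeries c) n
      = ∫ x : AddCircle T, ∑' k, fourier (-n) x • (c k * fourier k x) ∂haarAddCircle := by
        simp only [fourierCoeff, fourierSeries, smul_eq_mul, tsum_mul_left]
    _ = ∑' k, c k * fourierCoeff (T := T) (fourier k) n := by
        rw [← integral_tsum_of_summable_integral_norm hint (by simpa only [hnorm] using hc)]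
        exact tsum_congr fun k => fourierCoeff.const_mul _ _ _
    _ = c n := by
        rw [tsum_eq_single n fun k hk => by simp [fourierCoeff_fourier, Ne.symm hk]]
        simp [fourierCoeff_fourier]

theorem hasSum_sq_norm_fourierSeries (hc : Summable fun k => ‖c k‖) :
    HasSum (fun k => ‖c k‖ ^ 2) (∫ x, ‖fourierSeries (T := T) c x‖ ^ 2 ∂haarAddCircle) := by
  let F : C(AddCircle T, ℂ) := ⟨fourierSeries c, continuous_fourierSeries hc⟩
  convert hasSum_sq_fourierCoeff (ContinuousMap.toLp (E := ℂ) 2 haarAddCircle ℂ F) using 1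
  · simp only [fourierCoeff_toLp, F, ContinuousMap.coe_mk, fourierCoeff_fourierSeries hc]
  · refine integral_congr_ae ?_
    filter_upwards [ContinuousMap.coeFn_toLp (p := 2) (μ := haarAddCircle) (𝕜 := ℂ) F] with x hx
    rw [hx]
    rfl

end AddCircle

section TwoPi

open AddCircle

local instance : Fact (0 < 2 * π) := ⟨two_pi_pos⟩

theorem fourierSeries_coe_two_pi (c : ℤ → ℂ) (t : ℝ) :
    fourierSeries (T := 2 * π) c t = ∑' k : ℤ, c k * exp (I * t * k) := by
  refine tsum_congr fun k => ?_
  rw [fourier_coe_apply]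
  congr 2
  field_simp [pi_ne_zero]
  push_cast
  ring

variable {c : ℤ → ℂ}

theorem continuous_tsum_mul_exp (hc : Summable fun k => ‖c k‖) :
    Continuous fun t : ℝ => ∑' k : ℤ, c k * exp (I * t * k) :=
  ((continuous_fourierSeries hc).comp continuous_quotient_mk').congr
    (fourierSeries_coe_two_pi c)

theorem hasSum_sq_norm_intervalIntegral_tsum_mul_exp (hc : Summable fun k => ‖c k‖) :
    HasSum (fun k => ‖c k‖ ^ 2)
      ((2 * π)⁻¹ * ∫ t in (-π)..π, ‖∑' k : ℤ, c k * exp (I * t * k)‖ ^ 2) := by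
  convert hasSum_sq_norm_fourierSeries (T := 2 * π) hc using 1
  rw [integral_haarAddCircle, ← AddCircle.intervalIntegral_preimage (2 * π) (-π),
    show -π + 2 * π = π by ring, smul_eq_mul]
  simp only [fourierSeries_coe_two_pi]

end TwoPi

theorem tsum_sqrt_mul_sqrt_le {ι : Type*} {f g : ι → ℝ} (hf : ∀ i, 0 ≤ f i) (hg : ∀ i, 0 ≤ g i)
    (hfs : Summable f) (hgs : Summable g) :
    ∑' i, √(f i) * √(g i) ≤ √(∑' i, f i) * √(∑' i, g i) :=
  tsum_le_of_sum_le' (by positivity) fun s =>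
    (sum_sqrt_mul_sqrt_le s hf hg).trans <| by
      gcongr
      exacts [hfs.sum_le_tsum s fun i _ => hf i, hgs.sum_le_tsum s fun i _ => hg i]

theorem antitoneOn_inv_one_add_sq : AntitoneOn (fun x : ℝ => (1 + x ^ 2)⁻¹) (Set.Ici 0) :=
  fun x hx y _ hxy => by
    simp only
    gcongr

theorem summable_nat_inv_one_add_sq : Summable fun n : ℕ => (1 + (n : ℝ) ^ 2)⁻¹ :=
  antitoneOn_inv_one_add_sq.summable_of_integrableOn_Ioi_zero
    integrable_inv_one_add_sq.integrableOn fun _ _ => by positivity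

theorem tsum_nat_inv_one_add_succ_sq_le : ∑' n : ℕ, (1 + ((n : ℝ) + 1) ^ 2)⁻¹ ≤ π / 2 := by
  simpa using antitoneOn_inv_one_add_sq.tsum_add_one_le_integral
    integrable_inv_one_add_sq.integrableOn fun _ _ => by positivity

theorem inv_one_add_sq_neg_succ (n : ℕ) :
    (1 + ((-(n + 1) : ℤ) : ℝ) ^ 2)⁻¹ = (1 + ((n : ℝ) + 1) ^ 2)⁻¹ := by
  push_cast
  ring

theorem summable_inv_one_add_neg_succ_sq :
    Summable fun n : ℕ => (1 + ((-(n + 1) : ℤ) : ℝ) ^ 2)⁻¹ := by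
  simpa only [inv_one_add_sq_neg_succ, Nat.cast_add, Nat.cast_one]
    using (summable_nat_add_iff 1).2 summable_nat_inv_one_add_sq

theorem summable_int_inv_one_add_sq : Summable fun k : ℤ => (1 + (k : ℝ) ^ 2)⁻¹ :=
  .of_nat_of_neg_add_one (by exact_mod_cast summable_nat_inv_one_add_sq)
    summable_inv_one_add_neg_succ_sq

theorem tsum_int_inv_one_add_sq_le : ∑' k : ℤ, (1 + (k : ℝ) ^ 2)⁻¹ ≤ 1 + π := by
  rw [tsum_of_nat_of_neg_add_one (f := fun k : ℤ => (1 + (k : ℝ) ^ 2)⁻¹)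
      (by exact_mod_cast summable_nat_inv_one_add_sq) summable_inv_one_add_neg_succ_sq]
  simp only [inv_one_add_sq_neg_succ, Int.cast_natCast]
  rw [summable_nat_inv_one_add_sq.tsum_eq_zero_add]
  push_cast
  linarith [tsum_nat_inv_one_add_succ_sq_le]

theorem hasSum_one_add_sq_mul_sq_intervalIntegral {M : ℤ → ℝ}
    (h1 : Summable fun k : ℤ => |M k|) (h2 : Summable fun k : ℤ => |(k : ℝ)| * |M k|) :
    HasSum (fun k : ℤ => (1 + (k : ℝ) ^ 2) * M k ^ 2) ((2 * π)⁻¹ *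
      ∫ t in (-π)..π, ‖∑' k : ℤ, (M k : ℂ) * exp (I * t * k)‖ ^ 2 +
        ‖∑' k : ℤ, I * k * M k * exp (I * t * k)‖ ^ 2) := by
  have hc : Summable fun k : ℤ => ‖(M k : ℂ)‖ := by simpa using h1
  have hc' : Summable fun k : ℤ => ‖I * k * M k‖ := by simpa using h2
  have hint {c : ℤ → ℂ} (hc : Summable fun k => ‖c k‖) :
      IntervalIntegrable (fun t : ℝ => ‖∑' k : ℤ, c k * exp (I * t * k)‖ ^ 2) volume (-π) π :=
    ((continuous_tsum_mul_exp hc).norm.pow 2).intervalIntegrable _ _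
  rw [integral_add (hint hc) (hint hc'), mul_add]
  convert (hasSum_sq_norm_intervalIntegral_tsum_mul_exp hc).add
    (hasSum_sq_norm_intervalIntegral_tsum_mul_exp hc') using 1
  funext k
  simp only [norm_mul, norm_I, norm_real, norm_intCast, Real.norm_eq_abs, one_mul, mul_pow, sq_abs]
  ring

/-- Lemma 6 (Presman's smoothing inequality): the total variation of a measure `M`
on ℤ is bounded via the `L²`-norms of its Fourier transform `M̂` and of the termwise
derivative `M̂′`. -/
theorem total_variation_le_fourier (M : ℤ → ℝ)
    (h1 : Summable fun k : ℤ => |M k|)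
    (h2 : Summable fun k : ℤ => |(k : ℝ)| * |M k|) :
    ∑' k : ℤ, |M k| ≤
      Real.sqrt (1 / 2 + 1 / (2 * Real.pi)) *
        Real.sqrt (∫ t in (-Real.pi)..Real.pi,
          ‖∑' k : ℤ, (M k : ℂ) * Complex.exp (Complex.I * t * k)‖ ^ 2 +
          ‖∑' k : ℤ,
            Complex.I * (k : ℂ) * (M k : ℂ) * Complex.exp (Complex.I * t * k)‖ ^ 2) := by
  have hS := hasSum_one_add_sq_mul_sq_intervalIntegral h1 h2
  calc ∑' k : ℤ, |M k|
      = ∑' k : ℤ, √((1 + (k : ℝ) ^ 2)⁻¹) * √((1 + (k : ℝ) ^ 2) * M k ^ 2) :=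
        tsum_congr fun k => by
          rw [← sqrt_mul (by positivity), inv_mul_cancel_left₀ (by positivity), sqrt_sq_eq_abs]
    _ ≤ √(∑' k : ℤ, (1 + (k : ℝ) ^ 2)⁻¹) * √(∑' k : ℤ, (1 + (k : ℝ) ^ 2) * M k ^ 2) :=
        tsum_sqrt_mul_sqrt_le (fun _ => by positivity) (fun _ => by positivity)
          summable_int_inv_one_add_sq hS.summable
    _ ≤ √(1 + π) * √(∑' k : ℤ, (1 + (k : ℝ) ^ 2) * M k ^ 2) := by
        gcongr
        exact tsum_int_inv_one_add_sq_le
    _ = _ := by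
        rw [hS.tsum_eq, ← sqrt_mul (by positivity), ← sqrt_mul (by positivity), ← mul_assoc]
        congr 2
        field_simp
        ring
end
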